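/- For every integer n ≥ 1, the number of labelled plane trees with 2n edges having an even number of leaves equals the number of labelled plane trees with 2n edges having an odd number of leaves; that is, Q_e(2n) − Q_o(2n) = 0. -/
import Mathlib


/-- A labelled plane tree: a root carrying a natural-number label together with a finite
ordered list of labelled plane subtrees. -/
inductive LPlaneTree : Type
  | node : ℕ → List LPlaneTree → LPlaneTree

namespace LPlaneTree

/-- The number of vertices of a labelled plane tree. -/
def numVertices : LPlaneTree → ℕ
  | node _ ts => 1 + (ts.attach.map fun x => numVertices x.1).sum
decreasing_by
  have := List.sizeOf_lt_of_mem x.2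
  simp only [LPlaneTree.node.sizeOf_spec]
  omega

/-- The number of edges of a labelled plane tree: one less than the number of vertices. -/
def numEdges (t : LPlaneTree) : ℕ := t.numVertices - 1

/-- The number of leaves (vertices with no children) of a labelled plane tree. -/
def numLeaves : LPlaneTree → ℕ
  | node _ [] => 1
  | node _ (t :: ts) => ((t :: ts).attach.map fun x => numLeaves x.1).sum
decreasing_by
  have := List.sizeOf_lt_of_mem x.2
  simp only [LPlaneTree.node.sizeOf_spec]
  omega

/-- The list of all labels appearing in a labelled plane tree. -/
def labels : LPlaneTree → List ℕ
  | node a ts => a :: (ts.attach.map fun x => labels x.1).flatten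
decreasing_by
  have := List.sizeOf_lt_of_mem x.2
  simp only [LPlaneTree.node.sizeOf_spec]
  omega

/-- A labelled plane tree with `n` edges: it has `n` edges and its `n + 1` vertices are
labelled bijectively by `{1, 2, …, n+1}`. -/
def IsLabelled (n : ℕ) (t : LPlaneTree) : Prop :=
  t.numEdges = n ∧ t.labels.Perm (List.range' 1 (n + 1))

end LPlaneTree

/-! ### Auxiliary development: first-child/next-sibling binary trees -/

inductive BT : Type
  | leaf : BT
  | node : ℕ → BT → BT → BT
deriving DecidableEq

namespace BT

def size : BT → ℕ
  | leaf => 0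
  | node _ l r => 1 + size l + size r

def lcount : BT → ℕ
  | leaf => 0
  | node _ l r => (if l = leaf then 1 else 0) + lcount l + lcount r

def blabels : BT → List ℕ
  | leaf => []
  | node a l r => a :: (blabels l ++ blabels r)

/-- whether some node has exactly one child -/
def one : BT → Bool
  | leaf => false
  | node _ l r => (decide (l = leaf) != decide (r = leaf)) || one l || one r

/-- the involution: swap children at the first (preorder) node with exactly one child -/
def f : BT → BT
  | leaf => leaf
  | node a l r =>
    if decide (l = leaf) != decide (r = leaf) then node a r l
    else if one l then node a (f l) r
    else node a l (f r)

theorem size_f : ∀ t, size (f t) = size t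
  | leaf => rfl
  | node a l r => by
    rw [f]
    split
    · simp only [size]; omega
    · split <;> simp only [size, size_f l, size_f r]

theorem size_eq_zero : ∀ t : BT, size t = 0 ↔ t = leaf
  | leaf => by simp [size]
  | node a l r => by simp [size]

theorem f_eq_leaf (t : BT) : f t = leaf ↔ t = leaf := by
  rw [← size_eq_zero, ← size_eq_zero, size_f]

theorem blabels_f : ∀ t, (blabels (f t)).Perm (blabels t)
  | leaf => List.Perm.refl _
  | node a l r => by
    rw [f]
    split
    · simp only [blabels]
      exact (List.perm_append_comm).cons a
    · split
      · exact (((blabels_f l).append_right _).cons a)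
      · exact (((blabels_f r).append_left _).cons a)

theorem one_f : ∀ t, one (f t) = one t
  | leaf => rfl
  | node a l r => by
    rw [f]
    split
    · simp only [one]
      by_cases hl : l = leaf <;> by_cases hr : r = leaf <;>
        simp [hl, hr, Bool.or_comm, Bool.or_assoc, Bool.or_left_comm]
    · have hdl : decide (f l = leaf) = decide (l = leaf) := by
        simp only [decide_eq_decide]; exact f_eq_leaf l
      have hdr : decide (f r = leaf) = decide (r = leaf) := by
        simp only [decide_eq_decide]; exact f_eq_leaf r
      split
      · simp only [one, one_f l, hdl]
      · simp only [one, one_f r, hdr]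

theorem one_false_odd : ∀ t : BT, one t = false → t = leaf ∨ Odd (size t)
  | leaf => fun _ => Or.inl rfl
  | node a l r => by
    intro h
    simp only [one, Bool.or_eq_false_iff, bne_eq_false_iff_eq, decide_eq_decide] at h
    obtain ⟨⟨hlr, hl⟩, hr⟩ := h
    right
    rcases one_false_odd l hl with hL | hL <;> rcases one_false_odd r hr with hR | hR
    · subst hL; subst hR; simp [size]
    · rw [hlr.mp hL] at hR; exact absurd hR (by decide)
    · rw [hlr.mpr hR] at hL; exact absurd hL (by decide)
    · obtain ⟨k, hk⟩ := hL; obtain ⟨m, hm⟩ := hR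
      exact ⟨k + m + 1, by simp only [size]; omega⟩

theorem lcount_parity : ∀ t : BT, one t = true → Odd (lcount (f t) + lcount t)
  | leaf => by simp [one]
  | node a l r => by
    intro h
    rw [f]
    split
    · rename_i hx
      simp only [bne_iff_ne, ne_eq, decide_eq_decide] at hx
      by_cases hl : l = leaf
      · have hr : r ≠ leaf := fun hr => hx (by simp [hl, hr])
        subst hl
        simp only [lcount, if_neg hr, reduceIte]
        rw [Nat.odd_iff]; omega
      · have hr : r = leaf := by
          by_contra hr; exact hx (by simp [hl, hr])
        subst hr
        simp only [lcount, if_neg hl, reduceIte]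
        rw [Nat.odd_iff]; omega
    · rename_i hx
      simp only [bne_iff_ne, ne_eq, decide_eq_decide, not_not] at hx
      split
      · rename_i hol
        have hl : l ≠ leaf := by
          intro hleaf; subst hleaf; simp [one] at hol
        have hfl : f l ≠ leaf := fun hh => hl ((f_eq_leaf l).mp hh)
        have IH := lcount_parity l hol
        simp only [lcount, if_neg hl, if_neg hfl]
        rw [Nat.odd_iff] at IH ⊢; omega
      · rename_i hol
        have hor : one r = true := by
          have h' := h
          simp only [one, Bool.or_eq_true, bne_iff_ne, ne_eq, decide_eq_decide] at h'
          tauto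
        have IH := lcount_parity r hor
        simp only [lcount]
        rw [Nat.odd_iff] at IH ⊢; omega

theorem f_invol : ∀ t : BT, one t = true → f (f t) = t
  | leaf => by simp [one]
  | node a l r => by
    intro h
    rw [f]
    split
    · rename_i hx
      rw [f, if_pos (by rw [bne_iff_ne] at hx ⊢; exact hx.symm)]
    · rename_i hx
      simp only [bne_iff_ne, ne_eq, decide_eq_decide, not_not] at hx
      split
      · rename_i hol
        have hl : l ≠ leaf := fun hleaf => by subst hleaf; simp [one] at hol
        have hr : r ≠ leaf := fun hleaf => hl (hx.mpr hleaf)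
        have hfl : f l ≠ leaf := fun hh => hl ((f_eq_leaf l).mp hh)
        rw [f, if_neg (by simp [hfl, hr]), if_pos (by rw [one_f]; exact hol),
          f_invol l hol]
      · rename_i hol
        have hor : one r = true := by
          have h' := h
          simp only [one, Bool.or_eq_true, bne_iff_ne, ne_eq, decide_eq_decide] at h'
          tauto
        have hr : r ≠ leaf := fun hleaf => by subst hleaf; simp [one] at hor
        have hl : l ≠ leaf := fun hleaf => hr (hx.mp hleaf)
        have hfr : f r ≠ leaf := fun hh => hr ((f_eq_leaf r).mp hh)
        rw [f, if_neg (by simp [hl, hfr]), if_neg (by simp [hol]), f_invol r hor]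

end BT

namespace LPlaneTree

def toBT : List LPlaneTree → BT
  | [] => BT.leaf
  | node a cs :: rest => BT.node a (toBT cs) (toBT rest)
decreasing_by
  all_goals (simp only [List.cons.sizeOf_spec, LPlaneTree.node.sizeOf_spec]; omega)

def fromBT : BT → List LPlaneTree
  | BT.leaf => []
  | BT.node a l r => node a (fromBT l) :: fromBT r

theorem to_from : ∀ b : BT, toBT (fromBT b) = b
  | BT.leaf => by simp [fromBT, toBT]
  | BT.node a l r => by rw [fromBT, toBT, to_from l, to_from r]

theorem from_to : ∀ ts : List LPlaneTree, fromBT (toBT ts) = ts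
  | [] => by simp [toBT, fromBT]
  | node a cs :: rest => by rw [toBT, fromBT, from_to cs, from_to rest]
decreasing_by
  all_goals (simp only [List.cons.sizeOf_spec, LPlaneTree.node.sizeOf_spec]; omega)

theorem toBT_eq_leaf : ∀ ts : List LPlaneTree, toBT ts = BT.leaf ↔ ts = []
  | [] => by simp [toBT]
  | node a cs :: rest => by simp [toBT]

theorem numVertices_node (a : ℕ) (ts : List LPlaneTree) :
    numVertices (node a ts) = 1 + (ts.map numVertices).sum := by
  rw [numVertices, List.attach_map_val]

theorem labels_node (a : ℕ) (ts : List LPlaneTree) :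
    labels (node a ts) = a :: (ts.map labels).flatten := by
  rw [labels, List.attach_map_val]

theorem sum_numVertices : ∀ ts : List LPlaneTree,
    (ts.map numVertices).sum = BT.size (toBT ts)
  | [] => by simp [toBT, BT.size]
  | node a cs :: rest => by
    rw [toBT, List.map_cons, List.sum_cons, numVertices_node, sum_numVertices cs,
      sum_numVertices rest, BT.size]
decreasing_by
  all_goals (simp only [List.cons.sizeOf_spec, LPlaneTree.node.sizeOf_spec]; omega)

theorem sum_numLeaves : ∀ ts : List LPlaneTree,
    (ts.map numLeaves).sum = BT.lcount (toBT ts)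
  | [] => by simp [toBT, BT.lcount]
  | node a cs :: rest => by
    rw [toBT, List.map_cons, List.sum_cons, sum_numLeaves rest, BT.lcount]
    cases cs with
    | nil =>
      have h1 : numLeaves (node a []) = 1 := by rw [numLeaves]
      rw [h1]
      simp [toBT, BT.lcount]
    | cons c cs' =>
      have h1 : numLeaves (node a (c :: cs')) = ((c :: cs').map numLeaves).sum := by
        rw [numLeaves, List.attach_map_val]
      rw [h1, sum_numLeaves (c :: cs'),
        if_neg (fun hh => List.cons_ne_nil c cs' ((toBT_eq_leaf _).mp hh))]
      simp [BT.lcount]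
decreasing_by
  all_goals (simp only [List.cons.sizeOf_spec, LPlaneTree.node.sizeOf_spec]; omega)

theorem flatten_labels : ∀ ts : List LPlaneTree,
    (ts.map labels).flatten = BT.blabels (toBT ts)
  | [] => by simp [toBT, BT.blabels]
  | node a cs :: rest => by
    rw [toBT, List.map_cons, List.flatten_cons, labels_node, flatten_labels cs,
      flatten_labels rest, BT.blabels]
    simp
decreasing_by
  all_goals (simp only [List.cons.sizeOf_spec, LPlaneTree.node.sizeOf_spec]; omega)

theorem numLeaves_of_ne_nil (a : ℕ) {ts : List LPlaneTree} (h : ts ≠ []) :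
    numLeaves (node a ts) = BT.lcount (toBT ts) := by
  cases ts with
  | nil => exact absurd rfl h
  | cons c cs =>
    rw [numLeaves, List.attach_map_val, sum_numLeaves]

/-- The involution on labelled plane trees. -/
def g : LPlaneTree → LPlaneTree
  | node a ts => node a (fromBT (BT.f (toBT ts)))

theorem numEdges_node (a : ℕ) (ts : List LPlaneTree) :
    numEdges (node a ts) = BT.size (toBT ts) := by
  rw [numEdges, numVertices_node, sum_numVertices]; omega

theorem g_spec {n : ℕ} (hn : 1 ≤ n) {t : LPlaneTree} (ht : t.IsLabelled (2 * n)) :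
    (g t).IsLabelled (2 * n) ∧ Odd ((g t).numLeaves + t.numLeaves) ∧ g (g t) = t := by
  obtain ⟨a, ts⟩ := t
  obtain ⟨hed, hperm⟩ := ht
  rw [numEdges_node] at hed
  set b := toBT ts with hb
  have hone : BT.one b = true := by
    cases hob : BT.one b with
    | true => rfl
    | false =>
      rcases BT.one_false_odd b hob with h | h
      · rw [h] at hed; simp [BT.size] at hed; omega
      · rw [hed, Nat.odd_iff] at h; omega
  have hts' : toBT (fromBT (BT.f b)) = BT.f b := to_from _
  have hg : g (node a ts) = node a (fromBT (BT.f b)) := rfl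
  have hts_ne : ts ≠ [] := by
    intro hnil
    rw [hnil] at hb
    rw [hb] at hed
    simp [toBT, BT.size] at hed; omega
  have hts'_ne : fromBT (BT.f b) ≠ [] := by
    intro hnil
    have : BT.f b = BT.leaf := by rw [← hts', hnil]; simp [toBT]
    rw [BT.f_eq_leaf, ← BT.size_eq_zero] at this
    omega
  refine ⟨⟨?_, ?_⟩, ?_, ?_⟩
  · rw [hg, numEdges_node, hts', BT.size_f, hed]
  · rw [hg, labels_node, flatten_labels, hts']
    refine List.Perm.trans ?_ ((labels_node a ts ▸ hperm :
      (a :: (ts.map labels).flatten).Perm _))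
    exact ((flatten_labels ts ▸ BT.blabels_f b : (BT.blabels (BT.f b)).Perm _).cons a)
  · rw [hg, numLeaves_of_ne_nil a hts'_ne, numLeaves_of_ne_nil a hts_ne, hts']
    exact BT.lcount_parity b hone
  · rw [hg]
    show node a (fromBT (BT.f (toBT (fromBT (BT.f b))))) = node a ts
    rw [hts', BT.f_invol b hone, hb, from_to]

end LPlaneTree


/-- For every integer `n ≥ 1`, the number of labelled plane trees with `2n` edges having
an even number of leaves equals the number of labelled plane trees with `2n` edges having
an odd number of leaves: `Q_e(2n) - Q_o(2n) = 0`. -/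
theorem labelled_even_leaves_card_eq_odd_leaves_card (n : ℕ) (hn : 1 ≤ n) :
    {t : LPlaneTree | t.IsLabelled (2 * n) ∧ Even t.numLeaves}.ncard =
      {t : LPlaneTree | t.IsLabelled (2 * n) ∧ Odd t.numLeaves}.ncard := by
  set Se := {t : LPlaneTree | t.IsLabelled (2 * n) ∧ Even t.numLeaves} with hSe
  set So := {t : LPlaneTree | t.IsLabelled (2 * n) ∧ Odd t.numLeaves} with hSo
  have himg : So = LPlaneTree.g '' Se := by
    ext t
    simp only [hSe, hSo, Set.mem_image, Set.mem_setOf_eq]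
    constructor
    · rintro ⟨ht, hodd⟩
      obtain ⟨hl, hpar, hinv⟩ := LPlaneTree.g_spec hn ht
      refine ⟨t.g, ⟨hl, ?_⟩, hinv⟩
      obtain ⟨hl2, hpar2, _⟩ := LPlaneTree.g_spec hn ht
      rw [Nat.odd_iff] at hpar hodd
      rw [Nat.even_iff]
      omega
    · rintro ⟨s, ⟨hs, heven⟩, hst⟩
      obtain ⟨hl, hpar, _⟩ := LPlaneTree.g_spec hn hs
      subst hst
      refine ⟨hl, ?_⟩
      rw [Nat.odd_iff] at hpar ⊢
      rw [Nat.even_iff] at heven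
      omega
  have hinj : Set.InjOn LPlaneTree.g Se := by
    intro x hx y hy hxy
    have hx' := (LPlaneTree.g_spec hn hx.1).2.2
    have hy' := (LPlaneTree.g_spec hn hy.1).2.2
    rw [← hx', ← hy', hxy]
  rw [himg, Set.ncard_image_of_injOn hinj]
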